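/- Let n ≥ 2 and let h₁, …, hₙ be positive reals with 0 < h̲ = h₁ ≤ h₂ ≤ ⋯ ≤ hₙ = h̄ < ∞ and h̲ < h̄. Let Aₙ = (1/n)·Σᵢ hᵢ and Gₙ = (Πᵢ hᵢ)^{1/n} be the arithmetic and geometric means, and Dₙ = log Aₙ − log Gₙ. Then Dₙ ≤ −log H + H − 1, where H = h̲·(log h̄ − log h̲)/(h̄ − h̲). -/

import Mathlib

open scoped BigOperators

/-!
On `[h̲, h̄]` the concave function `log` lies above its chord, so the mean of the `log hᵢ` is at
least the chord evaluated at the mean `A`: `log h̲ + (A - h̲) s` with `s` the slope of the chord.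
Hence `Dₙ ≤ log A - log h̲ - (A - h̲) s`, and maximizing the right-hand side over `A > 0`
(via `log (s A) ≤ s A - 1`) gives `-log H + H - 1` with `H = h̲ s`.
-/

theorem ConcaveOn.add_mul_slope_le {s : Set ℝ} {f : ℝ → ℝ} (hf : ConcaveOn ℝ s f) {a b x : ℝ}
    (ha : a ∈ s) (hb : b ∈ s) (hax : a ≤ x) (hxb : x ≤ b) :
    f a + (x - a) * ((f b - f a) / (b - a)) ≤ f x := by
  rcases hax.eq_or_lt with rfl | hax'
  · simp
  have hba : 0 < b - a := by linarith
  have hcomb := hf.2 ha hb (div_nonneg (sub_nonneg.2 hxb) hba.le)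
    (div_nonneg (sub_nonneg.2 hax) hba.le) (by rw [← add_div]; field_simp; ring)
  have hx : ((b - x) / (b - a)) • a + ((x - a) / (b - a)) • b = x := by
    simp only [smul_eq_mul]; field_simp; ring
  rw [hx, smul_eq_mul, smul_eq_mul] at hcomb
  calc f a + (x - a) * ((f b - f a) / (b - a))
      = (b - x) / (b - a) * f a + (x - a) / (b - a) * f b := by field_simp; ring
    _ ≤ f x := hcomb

theorem ConcaveOn.add_mul_slope_le_mean {s : Set ℝ} {f : ℝ → ℝ} (hf : ConcaveOn ℝ s f)
    {ι : Type*} [Fintype ι] [Nonempty ι] {a b : ℝ} (ha : a ∈ s) (hb : b ∈ s) (h : ι → ℝ)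
    (hmem : ∀ i, a ≤ h i ∧ h i ≤ b) :
    f a + ((∑ i, h i) / Fintype.card ι - a) * ((f b - f a) / (b - a))
      ≤ (∑ i, f (h i)) / Fintype.card ι := by
  set N : ℝ := (Fintype.card ι : ℝ)
  have hN : 0 < N := Nat.cast_pos.2 Fintype.card_pos
  have hsum : ∑ i, (f a + (h i - a) * ((f b - f a) / (b - a))) ≤ ∑ i, f (h i) :=
    Finset.sum_le_sum fun i _ => hf.add_mul_slope_le ha hb (hmem i).1 (hmem i).2
  rw [Finset.sum_add_distrib, ← Finset.sum_mul, Finset.sum_sub_distrib] at hsum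
  simp only [Finset.sum_const, Finset.card_univ, nsmul_eq_mul] at hsum
  rw [le_div_iff₀ hN]
  calc (f a + ((∑ i, h i) / N - a) * ((f b - f a) / (b - a))) * N
      = N * f a + ((∑ i, h i) - N * a) * ((f b - f a) / (b - a)) := by field_simp
    _ ≤ ∑ i, f (h i) := hsum

theorem Real.log_sub_add_mul_le {a s A : ℝ} (ha : 0 < a) (hs : 0 < s) (hA : 0 < A) :
    Real.log A - (Real.log a + (A - a) * s) ≤ -Real.log (a * s) + a * s - 1 := by
  have hlog := Real.log_le_sub_one_of_pos (mul_pos hs hA)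
  rw [Real.log_mul hs.ne' hA.ne'] at hlog
  rw [Real.log_mul ha.ne' hs.ne']
  linarith

/-- Upper bound for Dₙ = log Aₙ - log Gₙ of ordered positive reals h₁ ≤ ⋯ ≤ hₙ
with h̲ = h₁ < hₙ = h̄: Dₙ ≤ -log H + H - 1 with H = h̲(log h̄ - log h̲)/(h̄-h̲). -/
theorem stmt_12 (n : ℕ) (hn : 2 ≤ n) (h : Fin n → ℝ) (hmono : Monotone h)
    (hpos : 0 < h ⟨0, by omega⟩)
    (hlt : h ⟨0, by omega⟩ < h ⟨n - 1, by omega⟩) :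
    let hlo : ℝ := h ⟨0, by omega⟩
    let hhi : ℝ := h ⟨n - 1, by omega⟩
    let H : ℝ := hlo * (Real.log hhi - Real.log hlo) / (hhi - hlo)
    Real.log ((∑ i, h i) / n) - (∑ i, Real.log (h i)) / n ≤ -Real.log H + H - 1 := by
  intro a b H
  have : NeZero n := ⟨by omega⟩
  have hb : 0 < b := hpos.trans hlt
  have hmem : ∀ i, a ≤ h i ∧ h i ≤ b := fun i =>
    ⟨hmono (Fin.mk_le_mk.2 (Nat.zero_le _)), hmono (Fin.mk_le_mk.2 (by omega))⟩
  have hmean := strictConcaveOn_log_Ioi.concaveOn.add_mul_slope_le_mean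
    (Set.mem_Ioi.2 hpos) (Set.mem_Ioi.2 hb) h hmem
  rw [Fintype.card_fin] at hmean
  have hs : 0 < (Real.log b - Real.log a) / (b - a) :=
    div_pos (sub_pos.2 (Real.log_lt_log hpos hlt)) (sub_pos.2 hlt)
  have hA : 0 < (∑ i, h i) / n :=
    div_pos (Finset.sum_pos (fun i _ => hpos.trans_le (hmem i).1) Finset.univ_nonempty)
      (by positivity)
  have hH : H = a * ((Real.log b - Real.log a) / (b - a)) := mul_div_assoc _ _ _
  rw [hH]
  linarith [Real.log_sub_add_mul_le hpos hs hA]
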